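/- arXiv:2010.01967 — 11 statements merged into one kernel-verified Lean document; each statement's English description precedes it below -/
import Mathlib

section
/- Let X be a set and f : X → X a map. Then f(Ω(f)) = Ω(f) if and only if every point x ∈ Ω(f) admits a backward orbit, i.e., a sequence (x_i)_{i ≥ 0} of points of X with x₀ = x and f(x_{i+1}) = x_i for all i ≥ 0. -/
/-- `f(Ω(f)) = Ω(f)` if and only if every point of the limit set `Ω(f)` admits a
backward orbit. -/
theorem image_limitSet_eq_iff_backwardOrbit {X : Type*} (f : X → X) :
    f '' (⋂ n ≥ 1, Set.range f^[n]) = (⋂ n ≥ 1, Set.range f^[n]) ↔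
      ∀ x ∈ ⋂ n ≥ 1, Set.range f^[n],
        ∃ c : ℕ → X, c 0 = x ∧ ∀ i : ℕ, f (c (i + 1)) = c i := by
  constructor
  · intro h x hx
    have key : ∀ y, y ∈ (⋂ n ≥ 1, Set.range f^[n]) →
        ∃ z, z ∈ (⋂ n ≥ 1, Set.range f^[n]) ∧ f z = y := by
      intro y hy
      rw [← h] at hy
      obtain ⟨z, hz, hfz⟩ := hy
      exact ⟨z, hz, hfz⟩
    choose g hg1 hg2 using key
    let c : ℕ → {y // y ∈ (⋂ n ≥ 1, Set.range f^[n])} := fun n =>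
      Nat.rec ⟨x, hx⟩ (fun _ p => ⟨g p.1 p.2, hg1 p.1 p.2⟩) n
    exact ⟨fun n => (c n).1, rfl, fun i => hg2 _ (c i).2⟩
  · intro h
    apply Set.Subset.antisymm
    · rintro _ ⟨y, hy, rfl⟩
      simp only [Set.mem_iInter] at hy ⊢
      intro n hn
      obtain ⟨z, hz⟩ := hy n hn
      exact ⟨f z, by rw [← Function.iterate_succ_apply, Function.iterate_succ_apply', hz]⟩
    · intro x hx
      obtain ⟨c, hc0, hc⟩ := h x hx
      have key : ∀ i k : ℕ, f^[k] (c (i + k)) = c i := by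
        intro i k
        induction k with
        | zero => rfl
        | succ n ih => rw [Function.iterate_succ_apply, ← Nat.add_assoc, hc, ih]
      have hc1 : c 1 ∈ ⋂ n ≥ 1, Set.range f^[n] := by
        simp only [Set.mem_iInter]
        intro n _
        exact ⟨c (1 + n), key 1 n⟩
      exact ⟨c 1, hc1, by rw [hc 0, hc0]⟩
end

section
/- Let X be an infinite set. Then there exists a map f : X → X which is not pointwise nilpotent but whose limit set Ω(f) is a singleton. -/
/-- On any infinite set there exists a map which is not pointwise nilpotent but whose
limit set is a singleton. -/
theorem exists_non_pointwiseNilpotent_limitSet_singleton {X : Type*} [Infinite X] :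
    ∃ f : X → X,
      (¬ ∃ x₀ : X, ∀ x : X, ∃ n₀ ≥ 1, ∀ n ≥ n₀, f^[n] x = x₀) ∧
      ∃ x₀ : X, (⋂ n ≥ 1, Set.range f^[n]) = {x₀} := by
  classical
  set e : ℕ ↪ X := Infinite.natEmbedding X with he
  set f : X → X := fun x =>
    if h : ∃ k, x = e (k + 1) then e (h.choose + 2) else e 0 with hf
  have hf0 : f (e 0) = e 0 := by
    have h : ¬ ∃ k, e 0 = e (k + 1) := by
      rintro ⟨k, hk⟩
      exact Nat.succ_ne_zero k (e.injective hk).symm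
    simp [hf, h]
  have hfs : ∀ k, f (e (k + 1)) = e (k + 2) := by
    intro k
    have h : ∃ j, e (k + 1) = e (j + 1) := ⟨k, rfl⟩
    have hch : k = h.choose := by
      have := h.choose_spec
      have := e.injective this
      omega
    simp only [hf, dif_pos h]
    rw [← hch]
  have hrange : ∀ x, f x = e 0 ∨ ∃ k, f x = e (k + 2) := by
    intro x
    by_cases h : ∃ k, x = e (k + 1)
    · right; exact ⟨h.choose, by simp [hf, dif_pos h]⟩
    · left; simp [hf, dif_neg h]
  -- iterates fix e 0
  have hiter0 : ∀ n, f^[n] (e 0) = e 0 := by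
    intro n
    induction n with
    | zero => rfl
    | succ n ih => rw [Function.iterate_succ_apply', ih, hf0]
  -- iterate structure: f^[n+1] x is e 0 or e m with m ≥ n + 2
  have hiter : ∀ n x, f^[n + 1] x = e 0 ∨ ∃ m, n + 2 ≤ m ∧ f^[n + 1] x = e m := by
    intro n
    induction n with
    | zero =>
      intro x
      rcases hrange x with h | ⟨k, h⟩
      · left; simpa using h
      · right; exact ⟨k + 2, by omega, by simpa using h⟩
    | succ n ih =>
      intro x
      rcases ih x with h | ⟨m, hm, h⟩
      · left; rw [Function.iterate_succ_apply', h, hf0]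
      · right
        obtain ⟨j, rfl⟩ : ∃ j, m = j + 1 := ⟨m - 1, by omega⟩
        refine ⟨j + 2, by omega, ?_⟩
        rw [Function.iterate_succ_apply', h, hfs]
  -- orbit of e 1
  have horb : ∀ n, f^[n] (e 1) = e (n + 1) := by
    intro n
    induction n with
    | zero => rfl
    | succ n ih => rw [Function.iterate_succ_apply', ih, hfs]
  refine ⟨f, ?_, e 0, ?_⟩
  · rintro ⟨x₀, hx₀⟩
    obtain ⟨n₀, hn₀, h⟩ := hx₀ (e 1)
    have h1 := h n₀ le_rfl
    have h2 := h (n₀ + 1) (by omega)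
    rw [horb] at h1 h2
    have := e.injective (h1.trans h2.symm)
    omega
  · ext x
    simp only [Set.mem_iInter, Set.mem_singleton_iff]
    constructor
    · intro hx
      by_contra hne
      obtain ⟨y, hy⟩ := hx 1 le_rfl
      rcases hiter 0 y with h | ⟨m, hm, h⟩
      · exact hne (by rw [← hy, h])
      · have hxm : x = e m := by rw [← hy, h]
        obtain ⟨z, hz⟩ := hx m (by omega)
        obtain ⟨j, rfl⟩ : ∃ j, m = j + 1 := ⟨m - 1, by omega⟩
        rcases hiter j z with h' | ⟨m', hm', h'⟩
        · exact hne (by rw [← hz, h'])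
        · have : e (j + 1) = e m' := by rw [← hxm, ← hz, h']
          have := e.injective this
          omega
    · rintro rfl n _
      exact ⟨e 0, hiter0 n⟩
end

section
/- Let X be an infinite set. Then there exists a map f : X → X such that f(Ω(f)) is a proper subset of Ω(f). -/
private def gAux (z : ℕ) : ℕ :=
  if z < 2 then 0
  else if (z-2).unpair.1 ≤ (z-2).unpair.2 then 0
  else if (z-2).unpair.2 = 0 then 1
  else 2 + Nat.pair (z-2).unpair.1 ((z-2).unpair.2 - 1)

private lemma gAux_step {z n k : ℕ} (h : gAux z = 2 + Nat.pair n k) :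
    z = 2 + Nat.pair n (k+1) ∧ k + 1 < n := by
  unfold gAux at h
  split_ifs at h with h0 h1 h2
  all_goals try omega
  have h' : Nat.pair (z-2).unpair.1 ((z-2).unpair.2 - 1) = Nat.pair n k := by omega
  obtain ⟨ha, hb⟩ := Nat.pair_eq_pair.1 h'
  have hz : z - 2 = Nat.pair n (k+1) := by
    conv_lhs => rw [← Nat.pair_unpair (z-2)]
    rw [ha]
    congr 1
    omega
  exact ⟨by omega, by omega⟩

private lemma gAux_step1 {z : ℕ} (h : gAux z = 1) :
    ∃ n, 0 < n ∧ z = 2 + Nat.pair n 0 := by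
  unfold gAux at h
  split_ifs at h with h0 h1 h2
  all_goals try omega
  refine ⟨(z-2).unpair.1, by omega, ?_⟩
  have hz : z - 2 = Nat.pair (z-2).unpair.1 0 := by
    conv_lhs => rw [← Nat.pair_unpair (z-2)]
    rw [h2]
  omega

private lemma gAux_chain {m y n k : ℕ} (h : gAux^[m+1] y = 2 + Nat.pair n k) :
    k + (m + 1) < n := by
  induction m generalizing y k with
  | zero =>
    simp only [zero_add, Function.iterate_one] at h
    have := (gAux_step h).2
    omega
  | succ m ih =>
    rw [Function.iterate_succ_apply'] at h
    obtain ⟨h1, h2⟩ := gAux_step h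
    have := ih (y := y) (k := k + 1) h1
    omega

private lemma gAux_hit {j n : ℕ} (h : j < n) : gAux^[j+1] (2 + Nat.pair n j) = 1 := by
  induction j with
  | zero =>
    simp only [zero_add, Function.iterate_one]
    unfold gAux
    rw [if_neg (by omega)]
    simp only [Nat.add_sub_cancel_left, Nat.unpair_pair]
    simp only [Nat.le_zero]
    rw [if_neg (by omega)]
    simp
  | succ j ih =>
    rw [Function.iterate_succ_apply]
    have hg : gAux (2 + Nat.pair n (j+1)) = 2 + Nat.pair n j := by
      unfold gAux
      rw [if_neg (by omega)]
      simp only [Nat.add_sub_cancel_left, Nat.unpair_pair]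
      rw [if_neg (by omega), if_neg (by omega), Nat.add_sub_cancel]
    rw [hg]
    exact ih (by omega)

/-- On any infinite set there exists a map `f` with `f(Ω(f)) ⊊ Ω(f)`. -/
theorem exists_image_limitSet_ssubset {X : Type*} [Infinite X] :
    ∃ f : X → X, f '' (⋂ n ≥ 1, Set.range f^[n]) ⊂ ⋂ n ≥ 1, Set.range f^[n] := by
  classical
  obtain e := Infinite.natEmbedding X
  set f : X → X := Function.extend e (fun m => e (gAux m)) id with hf
  have fe : ∀ m, f (e m) = e (gAux m) := fun m => e.injective.extend_apply _ _ _
  have fo : ∀ x, x ∉ Set.range e → f x = x := by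
    intro x hx
    exact Function.extend_apply' _ _ _ (by simpa [Set.range] using hx)
  have iter_e : ∀ m j, f^[m] (e j) = e (gAux^[m] j) := by
    intro m
    induction m with
    | zero => simp
    | succ m ih =>
      intro j
      rw [Function.iterate_succ_apply, fe, ih, Function.iterate_succ_apply]
  have iter_o : ∀ m x, x ∉ Set.range e → f^[m] x = x := by
    intro m
    induction m with
    | zero => simp
    | succ m ih =>
      intro x hx
      rw [Function.iterate_succ_apply, fo x hx, ih x hx]
  have mem_iff : ∀ m t, e t ∈ Set.range f^[m] ↔ t ∈ Set.range gAux^[m] := by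
    intro m t
    constructor
    · rintro ⟨x, hx⟩
      by_cases h : x ∈ Set.range e
      · obtain ⟨j, rfl⟩ := h
        rw [iter_e] at hx
        exact ⟨j, e.injective hx⟩
      · rw [iter_o m x h] at hx
        exact absurd ⟨t, hx.symm⟩ h
    · rintro ⟨j, hj⟩
      exact ⟨e j, by rw [iter_e, hj]⟩
  refine ⟨f, ?_, ?_⟩
  · -- f '' Ω ⊆ Ω
    rintro y ⟨x, hx, rfl⟩
    simp only [Set.mem_iInter] at hx ⊢
    intro n hn
    match n, hn with
    | (m+1), _ =>
      have hxm : x ∈ Set.range f^[m] := by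
        match m with
        | 0 => simp
        | (k+1) => exact hx (k+1) (by omega)
      obtain ⟨w, hw⟩ := hxm
      exact ⟨w, by rw [Function.iterate_succ_apply', hw]⟩
  · -- Ω ⊄ f '' Ω, witness e 1
    intro hsub
    have h1 : e 1 ∈ ⋂ n ≥ 1, Set.range f^[n] := by
      simp only [Set.mem_iInter]
      intro n hn
      match n, hn with
      | (m+1), _ =>
        rw [mem_iff]
        exact ⟨2 + Nat.pair (m+1) m, gAux_hit (by omega)⟩
    obtain ⟨x, hxΩ, hfx⟩ := hsub h1
    by_cases h : x ∈ Set.range e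
    · obtain ⟨j, rfl⟩ := h
      rw [fe] at hfx
      have hg : gAux j = 1 := e.injective hfx
      obtain ⟨n, hn, rfl⟩ := gAux_step1 hg
      simp only [Set.mem_iInter] at hxΩ
      have hmem := (mem_iff n _).1 (hxΩ n (by omega))
      obtain ⟨y, hy⟩ := hmem
      match n, hn with
      | (m+1), _ =>
        have := gAux_chain hy
        omega
    · rw [fo x h] at hfx
      exact h ⟨1, hfx.symm⟩
end

section
/- Let X be an infinite set. Then there exists a surjective map f : X → X which is pointwise nilpotent (and hence, being surjective, is not nilpotent). -/
private def gmap {X : Type*} (x₀ : X) : X × ℕ → X × ℕ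
  | (_, 0) => (x₀, 0)
  | (x, n+1) => (x, n)

private theorem gmap_iter {X : Type*} (x₀ : X) (x : X) (n : ℕ) :
    ∀ m ≥ n + 1, (gmap x₀)^[m] (x, n) = (x₀, 0) := by
  induction n generalizing x with
  | zero =>
    intro m hm
    obtain ⟨k, rfl⟩ := Nat.exists_eq_add_of_le hm
    induction k with
    | zero => simp [gmap]
    | succ k ih =>
      rw [show 1 + (k+1) = (1 + k) + 1 by omega, Function.iterate_succ_apply']
      rw [ih (by omega)]; rfl
  | succ n ih =>
    intro m hm
    obtain ⟨k, rfl⟩ := Nat.exists_eq_add_of_le hm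
    rw [show n + 1 + 1 + k = (n + 1 + k) + 1 by omega, Function.iterate_succ_apply]
    exact ih x _ (by omega)

/-- On any infinite set there exists a surjective pointwise nilpotent map. -/
theorem exists_surjective_pointwiseNilpotent {X : Type*} [Infinite X] :
    ∃ f : X → X, Function.Surjective f ∧
      ∃ x₀ : X, ∀ x : X, ∃ n₀ ≥ 1, ∀ n ≥ n₀, f^[n] x = x₀ := by
  have h : Nonempty (X ≃ X × ℕ) := by
    apply Cardinal.eq.mp
    simp [Cardinal.mk_prod, Cardinal.mul_aleph0_eq (Cardinal.aleph0_le_mk X)]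
  obtain ⟨e⟩ := h
  obtain ⟨y₀⟩ : Nonempty X := inferInstance
  refine ⟨fun x => e.symm (gmap y₀ (e x)), ?_, e.symm (y₀, 0), ?_⟩
  · intro x
    refine ⟨e.symm ((e x).1, (e x).2 + 1), ?_⟩
    simp [gmap]
  · intro x
    have key : ∀ m, (fun x => e.symm (gmap y₀ (e x)))^[m] x = e.symm ((gmap y₀)^[m] (e x)) := by
      intro m
      induction m with
      | zero => simp
      | succ m ih => rw [Function.iterate_succ_apply', ih, Function.iterate_succ_apply']; simp
    refine ⟨(e x).2 + 1, by omega, fun n hn => ?_⟩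
    rw [key, gmap_iter y₀ (e x).1 (e x).2 n hn]
end

section
/- Let X be a Hausdorff uniform space and f : X → X a uniformly continuous map such that f^n(X) is closed in X for all n ∈ ℕ. Then every chain-recurrent point of f belongs to the limit set: Crec(f) ⊆ Ω(f). -/
lemma chain_approx_aux {X : Type*} [UniformSpace X] (f : X → X) (hf : UniformContinuous f)
    (n : ℕ) (D : Set (X × X)) (hD : D ∈ uniformity X) :
    ∃ E ∈ uniformity X, ∀ c : ℕ → X,
      (∀ i < n, (f (c i), c (i + 1)) ∈ E) → (f^[n] (c 0), c n) ∈ D := by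
  induction n generalizing D with
  | zero =>
    exact ⟨D, hD, fun c _ => by simpa using refl_mem_uniformity hD⟩
  | succ n ih =>
    obtain ⟨D', hD', hcomp⟩ := comp_mem_uniformity_sets hD
    have hD'' : (fun p : X × X => (f p.1, f p.2)) ⁻¹' D' ∈ uniformity X := hf hD'
    obtain ⟨E1, hE1, hE1p⟩ := ih _ hD''
    refine ⟨E1 ∩ D', Filter.inter_mem hE1 hD', fun c hc => ?_⟩
    have h1 : (f^[n] (c 0), c n) ∈ (fun p : X × X => (f p.1, f p.2)) ⁻¹' D' :=
      hE1p c (fun i hi => (hc i (by omega)).1)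
    have h2 : (f (f^[n] (c 0)), f (c n)) ∈ D' := h1
    have h3 : (f (c n), c (n + 1)) ∈ D' := (hc n (by omega)).2
    have h4 : (f (f^[n] (c 0)), c (n + 1)) ∈ D := hcomp ⟨f (c n), h2, h3⟩
    rwa [Function.iterate_succ_apply']

/-- In a Hausdorff uniform space, if `f` is uniformly continuous and all images `f^[n](X)`
are closed, then every chain-recurrent point belongs to the limit set. -/
theorem chainRecurrent_subset_limitSet {X : Type*} [UniformSpace X] [T2Space X]
    (f : X → X) (hf : UniformContinuous f) (hcl : ∀ n : ℕ, IsClosed (Set.range f^[n]))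
    (x : X)
    (hx : ∀ E ∈ uniformity X, ∃ n ≥ 1, ∃ c : ℕ → X,
      c 0 = x ∧ c n = x ∧ ∀ i < n, (f (c i), c (i + 1)) ∈ E) :
    x ∈ ⋂ n ≥ 1, Set.range f^[n] := by
  simp only [Set.mem_iInter]
  intro n hn
  rw [← (hcl n).closure_eq, UniformSpace.mem_closure_iff_ball]
  intro V hV
  have hVs : Prod.swap ⁻¹' V ∈ uniformity X := by
    rw [uniformity_eq_symm] at hV
    exact hV
  obtain ⟨E, hE, hEp⟩ := chain_approx_aux f hf n _ hVs
  obtain ⟨m, hm, c, hc0, hcm, hcE⟩ := hx E hE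
  have hm0 : 0 < m := hm
  -- periodic extension
  set c' : ℕ → X := fun j => c (j % m) with hc'
  have key : ∀ j, c ((j + 1) % m) = c (j % m + 1) := by
    intro j
    have h1 : (j + 1) % m = (j % m + 1) % m := by
      conv_lhs => rw [← Nat.mod_add_div j m, add_right_comm]
      exact Nat.add_mul_mod_self_left _ _ _
    rcases lt_or_eq_of_le (Nat.succ_le_of_lt (Nat.mod_lt j hm0)) with h | h
    · rw [h1, Nat.mod_eq_of_lt h]
    · have h' : j % m + 1 = m := h
      rw [h1, h', Nat.mod_self, hc0, ← hcm]
  have hc'E : ∀ j, (f (c' j), c' (j + 1)) ∈ E := by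
    intro j
    show (f (c (j % m)), c ((j + 1) % m)) ∈ E
    rw [key j]
    exact hcE (j % m) (Nat.mod_lt j hm0)
  -- the shifted chain of length n ending at x
  set d : ℕ → X := fun j => c' (n * m - n + j) with hd
  have hdE : ∀ i < n, (f (d i), d (i + 1)) ∈ E := by
    intro i _
    show (f (c' (n * m - n + i)), c' (n * m - n + (i + 1))) ∈ E
    rw [show n * m - n + (i + 1) = (n * m - n + i) + 1 by omega]
    exact hc'E _
  have hmain := hEp d hdE
  have hdn : d n = x := by
    have hle : n ≤ n * m := Nat.le_mul_of_pos_right n hm0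
    show c' (n * m - n + n) = x
    rw [Nat.sub_add_cancel hle]
    show c (n * m % m) = x
    rw [Nat.mul_mod_left, hc0]
  rw [hdn] at hmain
  exact ⟨f^[n] (d 0), hmain, ⟨d 0, rfl⟩⟩
end

section
/- Let X be a compact Hausdorff topological space and f : X → X a continuous map. Then every chain-recurrent point of f (with respect to the unique uniform structure inducing the topology of X) belongs to the limit set Ω(f) = ⋂_{n ≥ 1} f^n(X). -/
/-!
On a compact space `f` and all its iterates are uniformly continuous, so for each `n` a fine
enough pseudo-orbit of length `n` ends close to the `f^[n]`-image of its starting point.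
Running around a closed chain through `x` often enough gives such pseudo-orbits of every
length ending at `x`; hence `x` lies in the closure of `range f^[n]`, which is compact and
therefore closed.
-/

open Set Filter Uniformity

section PseudoOrbit

variable {X : Type*}

def IsPseudoOrbit (f : X → X) (E : Set (X × X)) (c : ℕ → X) (n : ℕ) : Prop :=
  ∀ i < n, (f (c i), c (i + 1)) ∈ E

namespace IsPseudoOrbit

variable {f : X → X} {E : Set (X × X)} {c : ℕ → X} {n : ℕ}

theorem mono {F : Set (X × X)} (hc : IsPseudoOrbit f E c n) (hEF : E ⊆ F) :
    IsPseudoOrbit f F c n :=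
  fun i hi => hEF (hc i hi)

theorem shift {k : ℕ} (hc : IsPseudoOrbit f E c (n + k)) :
    IsPseudoOrbit f E (fun i => c (i + k)) n := fun i hi => by
  simpa only [Nat.add_right_comm] using hc (i + k) (by omega)

theorem mod_period {m : ℕ} (hm : 0 < m) (hper : c m = c 0) (hc : IsPseudoOrbit f E c m) :
    IsPseudoOrbit f E (fun i => c (i % m)) n := by
  intro i _
  have hi : i % m < m := Nat.mod_lt i hm
  dsimp only
  rw [← Nat.mod_add_mod]
  rcases (show i % m + 1 ≤ m from hi).eq_or_lt with hwrap | hlt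
  · rw [hwrap, Nat.mod_self, ← hper]
    simpa only [hwrap] using hc _ hi
  · rw [Nat.mod_eq_of_lt hlt]
    exact hc _ hi

theorem exists_ending_at_of_closed {m : ℕ} (hm : 0 < m) (hper : c m = c 0)
    (hc : IsPseudoOrbit f E c m) (n : ℕ) :
    ∃ d : ℕ → X, d n = c 0 ∧ IsPseudoOrbit f E d n := by
  have hlen : n + (n * m - n) = n * m := Nat.add_sub_cancel' (Nat.le_mul_of_pos_right n hm)
  refine ⟨fun i => c ((i + (n * m - n)) % m), ?_, shift (c := fun j => c (j % m)) ?_⟩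
  · simp only [hlen, Nat.mul_mod_left]
  · rw [hlen]
    exact hc.mod_period hm hper

end IsPseudoOrbit

theorem UniformContinuous.exists_isPseudoOrbit_iterate_mem [UniformSpace X] {f : X → X}
    (hf : UniformContinuous f) (n : ℕ) {V : Set (X × X)} (hV : V ∈ 𝓤 X) :
    ∃ E ∈ 𝓤 X, ∀ c, IsPseudoOrbit f E c n → (f^[n] (c 0), c n) ∈ V := by
  induction n generalizing V with
  | zero => exact ⟨V, hV, fun c _ => refl_mem_uniformity hV⟩
  | succ n ih =>
    obtain ⟨W, hW, hWV⟩ := comp_mem_uniformity_sets hV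
    obtain ⟨E, hE, hEW⟩ := ih hW
    refine ⟨E ∩ Prod.map f^[n] f^[n] ⁻¹' W, inter_mem hE (UniformContinuous.iterate f n hf hW),
      fun c hc => ?_⟩
    have hhead : (f^[n + 1] (c 0), f^[n] (c 1)) ∈ W := (hc 0 n.succ_pos).2
    have htail : (f^[n] (c 1), c (n + 1)) ∈ W :=
      hEW _ (hc.mono inter_subset_left).shift
    exact hWV ⟨_, hhead, htail⟩

end PseudoOrbit

/-- On a compact Hausdorff space, every chain-recurrent point of a continuous self-map
(with respect to the unique compatible uniform structure) belongs to the limit set. -/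
theorem chainRecurrent_subset_limitSet_of_compact {X : Type*} [UniformSpace X]
    [CompactSpace X] [T2Space X] (f : X → X) (hf : Continuous f) (x : X)
    (hx : ∀ E ∈ uniformity X, ∃ n ≥ 1, ∃ c : ℕ → X,
      c 0 = x ∧ c n = x ∧ ∀ i < n, (f (c i), c (i + 1)) ∈ E) :
    x ∈ ⋂ n ≥ 1, Set.range f^[n] := by
  refine mem_iInter₂.2 fun n _ => ?_
  rw [← (isCompact_range (hf.iterate n)).isClosed.closure_eq,
    mem_closure_iff_nhds_basis (nhds_basis_uniformity (𝓤 X).basis_sets)]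
  intro V hV
  obtain ⟨E, hE, hshadow⟩ :=
    (CompactSpace.uniformContinuous_of_continuous hf).exists_isPseudoOrbit_iterate_mem n hV
  obtain ⟨m, hm, c, hc0, hcm, hc⟩ := hx E hE
  obtain ⟨d, hdn, hd⟩ := IsPseudoOrbit.exists_ending_at_of_closed hm (hcm.trans hc0.symm) hc n
  exact ⟨_, mem_range_self (d 0), hc0 ▸ hdn ▸ hshadow d hd⟩
end

section
/- Let G be a finitely generated group, A a set, and Σ ⊆ A^G a finite G-invariant subset (a finite subshift). Then Σ is a subshift of finite type: there exist a finite subset D ⊆ G and a subset P ⊆ A^D such that Σ = {x ∈ A^G : (g⁻¹x)|_D ∈ P for all g ∈ G}. -/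
/-- Over a finitely generated group, every finite subshift is of finite type. -/
theorem finite_subshift_isSFT {G A : Type*} [Group G] [Group.FG G] (S : Set (G → A))
    (hfin : S.Finite)
    (hinv : ∀ g : G, ∀ x ∈ S, (fun h : G => x (g⁻¹ * h)) ∈ S) :
    ∃ (D : Set G) (_ : D.Finite) (P : Set (D → A)),
      S = {x : G → A | ∀ g : G, (fun d : D => x (g * (d : G))) ∈ P} := by
  classical
  obtain ⟨T, hTclos, hTfin⟩ := Group.fg_iff.mp ‹Group.FG G›
  -- a finite "separating set" for the finitely many elements of S
  set w : (G → A) → (G → A) → G := fun x z =>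
    if h : x = z then 1 else (Function.ne_iff.mp h).choose with hw
  set F : Set G := insert 1 ((fun p : (G → A) × (G → A) => w p.1 p.2) '' (S ×ˢ S)) with hF
  have hFfin : F.Finite := ((hfin.prod hfin).image _).insert 1
  have h1F : (1 : G) ∈ F := Set.mem_insert _ _
  have hsep : ∀ x ∈ S, ∀ z ∈ S, (∀ f ∈ F, x f = z f) → x = z := by
    intro x hx z hz hagree
    by_contra hne
    have hmem : w x z ∈ F :=
      Set.mem_insert_of_mem _ ⟨(x, z), Set.mk_mem_prod hx hz, rfl⟩
    have hxz : x (w x z) ≠ z (w x z) := by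
      simp only [hw, dif_neg hne]
      exact (Function.ne_iff.mp hne).choose_spec
    exact hxz (hagree _ hmem)
  -- the window
  set D : Set G := F ∪ ⋃ t ∈ T, ((fun f => t * f) '' F ∪ (fun f => t⁻¹ * f) '' F) with hD
  have hDfin : D.Finite := by
    refine hFfin.union (Set.Finite.biUnion hTfin fun t _ => ?_)
    exact (hFfin.image _).union (hFfin.image _)
  have hFD : F ⊆ D := Set.subset_union_left
  have htD1 : ∀ t ∈ T, ∀ f ∈ F, t * f ∈ D := fun t ht f hf =>
    Set.mem_union_right _ (Set.mem_biUnion ht (Or.inl ⟨f, hf, rfl⟩))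
  have htD2 : ∀ t ∈ T, ∀ f ∈ F, t⁻¹ * f ∈ D := fun t ht f hf =>
    Set.mem_union_right _ (Set.mem_biUnion ht (Or.inr ⟨f, hf, rfl⟩))
  refine ⟨D, hDfin, (fun x : G → A => fun d : D => x (d : G)) '' S, ?_⟩
  ext x
  constructor
  · -- easy inclusion
    intro hx g
    refine ⟨fun h => x (g * h), by simpa using hinv g⁻¹ x hx, ?_⟩
    funext d; rfl
  · intro hx
    have hx' : ∀ g : G, ∃ z, z ∈ S ∧ ∀ d ∈ D, z d = x (g * d) := by
      intro g
      obtain ⟨z, hzS, hz⟩ := hx g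
      exact ⟨z, hzS, fun d hd => congrFun hz ⟨d, hd⟩⟩
    choose c hcS hc using hx'
    -- key step along generators
    have step : ∀ g t : G, (t ∈ T ∨ t⁻¹ ∈ T) →
        c (g * t) = fun h => c g (t * h) := by
      intro g t ht
      have h2 : (fun h => c g (t * h)) ∈ S := by simpa using hinv t⁻¹ (c g) (hcS g)
      refine hsep _ (hcS (g * t)) _ h2 fun f hf => ?_
      have htf : t * f ∈ D := by
        rcases ht with ht | ht
        · exact htD1 t ht f hf
        · simpa using htD2 t⁻¹ ht f hf
      calc c (g * t) f = x (g * t * f) := hc (g * t) f (hFD hf)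
        _ = x (g * (t * f)) := by rw [mul_assoc]
        _ = c g (t * f) := (hc g (t * f) htf).symm
    -- every group element is a word in T ∪ T⁻¹
    have main' : ∀ l : List G, (∀ y ∈ l, y ∈ T ∨ y⁻¹ ∈ T) →
        c l.prod = fun h => c 1 (l.prod * h) := by
      intro l
      induction l using List.reverseRecOn with
      | nil => intro _; simp
      | append_singleton l t ih =>
        intro hl
        have hlcond : ∀ y ∈ l, y ∈ T ∨ y⁻¹ ∈ T := fun y hy =>
          hl y (List.mem_append_left _ hy)
        have htc : t ∈ T ∨ t⁻¹ ∈ T := hl t (by simp)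
        rw [List.prod_append, List.prod_singleton, step l.prod t htc, ih hlcond]
        funext h
        simp [mul_assoc]
    have main : ∀ g : G, c g = fun h => c 1 (g * h) := by
      intro g
      have hg : g ∈ Submonoid.closure (T ∪ T⁻¹) := by
        have : g ∈ (Subgroup.closure T).toSubmonoid := by
          rw [hTclos]; trivial
        rwa [Subgroup.closure_toSubmonoid] at this
      obtain ⟨l, hl, rfl⟩ := Submonoid.exists_list_of_mem_closure hg
      refine main' l fun y hy => ?_
      rcases hl y hy with h | h
      · exact Or.inl h
      · exact Or.inr (by simpa [Set.mem_inv] using h)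
    have hxc : x = c 1 := by
      funext g
      have h1 : c g 1 = x (g * 1) := hc g 1 (hFD h1F)
      have h2 : c g 1 = c 1 (g * 1) := congrFun (main g) 1
      rw [mul_one] at h1 h2
      rw [← h1, h2]
    exact hxc ▸ hcS 1
end

section
/- Let G be a finitely generated group and A a set. Then every subshift Σ ⊆ A^G is a subshift of sub-finite-type, i.e., there exist a set B, a cellular automaton τ' : B^G → A^G, and a subshift of finite type Σ' ⊆ B^G such that Σ = τ'(Σ'). -/
universe u v

/-- Over a finitely generated group, every subshift `S ⊆ A^G` is of sub-finite-type:
it is the image of a subshift of finite type `Σ' ⊆ B^G` under a cellular automaton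
`τ' : B^G → A^G`.  Here `(g⁻¹ x)(m) = x (g * m)`. -/
theorem subshift_is_subFiniteType {G : Type u} {A : Type v} [Group G] [Group.FG G]
    (S : Set (G → A))
    (hinv : ∀ g : G, ∀ x ∈ S, (fun h : G => x (g⁻¹ * h)) ∈ S) :
    ∃ (B : Type (max u v)) (τ : (G → B) → (G → A)) (M : Set G) (_ : M.Finite)
      (μ : (M → B) → A),
      (∀ (x : G → B) (g : G), τ x g = μ (fun m : M => x (g * (m : G)))) ∧
      ∃ (D : Set G) (_ : D.Finite) (P : Set (D → B)),
        S = τ '' {x : G → B | ∀ g : G, (fun d : D => x (g * (d : G))) ∈ P} := by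
  obtain ⟨T, hT⟩ := Group.FG.out (G := G)
  refine ⟨G → A, fun x g => x (g * 1) 1, ({1} : Set G), Set.finite_singleton 1,
    fun f => f ⟨1, rfl⟩ 1, fun x g => rfl, ?_⟩
  have h1D : (1 : G) ∈ insert 1 (↑T : Set G) := Set.mem_insert _ _
  have hTD : ∀ s ∈ T, s ∈ insert 1 (↑T : Set G) := fun s hs => Set.mem_insert_of_mem _ hs
  refine ⟨insert 1 (↑T : Set G), T.finite_toSet.insert 1,
    {f | f ⟨1, h1D⟩ ∈ S ∧
      ∀ s (hs : s ∈ T), ∀ h : G, f ⟨s, hTD s hs⟩ h = f ⟨1, h1D⟩ (s * h)}, ?_⟩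
  ext y
  constructor
  · intro hy
    refine ⟨fun g h => y (g * h), fun g => ⟨?_, ?_⟩, ?_⟩
    · simpa using hinv g⁻¹ y hy
    · intro s hs h
      simp [mul_assoc]
    · funext g
      simp
  · rintro ⟨x, hx, rfl⟩
    have key : ∀ g : G, ∀ g' : G, x (g' * g) = fun h => x g' (g * h) := by
      intro g
      have hg : g ∈ Subgroup.closure (↑T : Set G) := hT ▸ Subgroup.mem_top g
      induction hg using Subgroup.closure_induction with
      | mem s hs =>
        intro g'
        funext h
        have := (hx g').2 s hs h
        simpa using this
      | one => intro g'; simp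
      | mul a b _ _ ha hb =>
        intro g'
        funext h
        calc x (g' * (a * b)) h = x (g' * a * b) h := by rw [mul_assoc]
          _ = x (g' * a) (b * h) := by rw [hb]
          _ = x g' (a * (b * h)) := by rw [ha]
          _ = x g' (a * b * h) := by rw [mul_assoc]
      | inv a _ ha =>
        intro g'
        funext h
        have := congrFun (ha (g' * a⁻¹)) (a⁻¹ * h)
        simpa [mul_assoc] using this.symm
    have hx1 : x 1 ∈ S := by simpa using (hx 1).1
    have heq : (fun g => x (g * 1) 1) = x 1 := by
      funext g
      have := congrFun (key g 1) 1
      simp only [one_mul, mul_one] at this ⊢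
      simp [this]
    show (fun g => x (g * 1) 1) ∈ S
    rw [heq]
    exact hx1
end

section
/- Let G be an infinite countable group, A a set, and Σ ⊆ A^G a topologically mixing closed subshift. Let τ : Σ → Σ be a cellular automaton. Suppose there exists a constant configuration x₀ ∈ Σ such that for every x ∈ Σ there is an integer n ≥ 1 with τ^n(x) = x₀. Then τ is nilpotent: there exists n₀ ≥ 1 such that τ^{n₀}(x) = x₀ for all x ∈ Σ. -/
open Set Function Filter Topology Pointwise

/-- Iterated memory sets: `mpowAux M k = M * M * ⋯ * M` (`k` factors), `mpowAux M 0 = {1}`. -/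
def mpowAux {G : Type*} [Group G] (M : Set G) : ℕ → Set G
  | 0 => {1}
  | k + 1 => M * mpowAux M k

lemma mpowAux_finite {G : Type*} [Group G] {M : Set G} (hM : M.Finite) :
    ∀ k, (mpowAux M k).Finite
  | 0 => Set.finite_singleton 1
  | k + 1 => hM.mul (mpowAux_finite hM k)

/-- Let `G` be an infinite countable group and `S ⊆ A^G` a topologically mixing closed
subshift.  Let `τ` be a cellular automaton (with memory set `M` and local rule `μ`)
mapping `S` into itself.  If there is a constant configuration `x₀ ∈ S` such that every
`x ∈ S` satisfies `τ^[n] x = x₀` for some `n ≥ 1`, then `τ` is nilpotent on `S`. -/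
theorem pointwise_to_nilpotent_mixing {G A : Type*} [Group G] [Countable G] [Infinite G]
    [TopologicalSpace A] [DiscreteTopology A]
    (S : Set (G → A))
    (hSclosed : IsClosed S)
    (hSinv : ∀ g : G, ∀ x ∈ S, (fun h : G => x (g⁻¹ * h)) ∈ S)
    (hmix : ∀ U V : Set (G → A), IsOpen U → IsOpen V → (U ∩ S).Nonempty →
      (V ∩ S).Nonempty → ∃ F : Set G, F.Finite ∧ ∀ g ∉ F,
        ((U ∩ S) ∩ (fun x : G → A => fun h : G => x (g⁻¹ * h)) '' (V ∩ S)).Nonempty)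
    (τ : (G → A) → (G → A)) (M : Set G) (hM : M.Finite) (μ : (M → A) → A)
    (hτ : ∀ (x : G → A) (g : G), τ x g = μ (fun m : M => x (g * (m : G))))
    (hτS : ∀ x ∈ S, τ x ∈ S)
    (x₀ : G → A) (hx₀S : x₀ ∈ S) (a₀ : A) (hx₀const : ∀ g : G, x₀ g = a₀)
    (hpt : ∀ x ∈ S, ∃ n ≥ 1, τ^[n] x = x₀) :
    ∃ n₀ ≥ 1, ∀ x ∈ S, τ^[n₀] x = x₀ := by
  classical
  -- continuity of τ
  have hτcont : Continuous τ := by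
    have hτeq : τ = fun x : G → A => fun g : G => μ (fun m : M => x (g * (m : G))) :=
      funext fun x => funext fun g => hτ x g
    rw [hτeq]
    haveI := hM.to_subtype
    refine continuous_pi fun g => ?_
    exact continuous_of_discreteTopology.comp
      (continuous_pi fun m : M => continuous_apply (g * (m : G)))
  -- Baire category argument: some iterate kills a nonempty open part of S
  obtain ⟨n, U, hUopen, hUne, hUkey⟩ :
      ∃ (n : ℕ) (U : Set (G → A)), IsOpen U ∧ (U ∩ S).Nonempty ∧
        ∀ y ∈ U ∩ S, τ^[n + 1] y = x₀ := by
    -- put a complete metric on `A` inducing the discrete topology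
    letI mA : MetricSpace A := MetricSpace.ofDistTopology
      (fun a b => if a = b then 0 else 1)
      (fun a => by simp)
      (fun a b => by simp [eq_comm])
      (fun a b c => by
        by_cases hab : a = b <;> by_cases hbc : b = c <;>
          simp [hab, hbc] <;> split <;> norm_num)
      (fun s => by
        constructor
        · intro _ x hx
          refine ⟨1, one_pos, fun y hy => ?_⟩
          by_cases h : x = y
          · simpa [← h] using hx
          · simp [h] at hy
        · intro _
          exact isOpen_discrete s)
      (fun {a b} h => by
        by_cases hab : a = b
        · exact hab
        · exact absurd h (by simp [hab]))
    haveI : CompleteSpace A := by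
      constructor
      intro f hf
      rcases (Metric.cauchy_iff.1 hf).2 1 one_pos with ⟨s, hs, hsmall⟩
      rcases hf.1.nonempty_of_mem hs with ⟨x, hx⟩
      refine ⟨x, le_trans ?_ (pure_le_nhds x)⟩
      rw [le_pure_iff]
      refine mem_of_superset hs fun y hy => ?_
      have hyx : y = x := by
        by_contra h
        have hd : dist y x = 1 := if_neg h
        have hlt := hsmall y hy x hx
        rw [hd] at hlt
        exact lt_irrefl 1 hlt
      exact mem_singleton_iff.2 hyx
    haveI := Encodable.ofCountable G
    letI mGA : MetricSpace (G → A) := PiCountable.metricSpace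
    haveI : CompleteSpace (G → A) := Pi.complete _
    haveI hScomplete : CompleteSpace ↥S := hSclosed.completeSpace_coe
    haveI : Nonempty ↥S := ⟨⟨x₀, hx₀S⟩⟩
    -- the closed pieces
    set C : ℕ → Set ↥S := fun n => {z : ↥S | τ^[n + 1] z.val = x₀} with hC
    have hclosed : ∀ n, IsClosed (C n) := by
      intro n
      have : C n = (fun z : ↥S => τ^[n + 1] z.val) ⁻¹' {x₀} := by
        ext z; simp [hC]
      rw [this]
      exact IsClosed.preimage ((hτcont.iterate (n + 1)).comp continuous_subtype_val)
        isClosed_singleton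
    have hcover : ⋃ n, C n = univ := by
      ext z
      simp only [mem_iUnion, mem_univ, iff_true]
      obtain ⟨n, hn1, hz⟩ := hpt z.val z.prop
      refine ⟨n - 1, ?_⟩
      have : n - 1 + 1 = n := Nat.succ_pred_eq_of_pos hn1
      simp only [hC, Set.mem_setOf_eq, this]
      exact hz
    obtain ⟨n, z, hz⟩ := nonempty_interior_of_iUnion_of_closed hclosed hcover
    have hmem : C n ∈ 𝓝 z := mem_interior_iff_mem_nhds.1 hz
    rw [nhds_subtype] at hmem
    obtain ⟨W, hW, hWsub⟩ := Filter.mem_comap.1 hmem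
    obtain ⟨U, hUW, hUopen, hzU⟩ := mem_nhds_iff.1 hW
    refine ⟨n, U, hUopen, ⟨z.val, hzU, z.prop⟩, fun y hy => ?_⟩
    exact hWsub (hUW hy.1 : (⟨y, hy.2⟩ : ↥S).val ∈ W)
  set N := n + 1 with hN
  -- equivariance of τ under left translations
  have hshift : ∀ (c : G) (x : G → A), τ (fun h => x (c * h)) = fun h => τ x (c * h) := by
    intro c x
    funext g
    rw [hτ, hτ]
    congr 1
    funext m
    rw [mul_assoc]
  have hshiftIter : ∀ (k : ℕ) (c : G) (x : G → A),
      τ^[k] (fun h => x (c * h)) = fun h => τ^[k] x (c * h) := by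
    intro k
    induction k with
    | zero => intro c x; simp
    | succ k ih =>
      intro c x
      rw [iterate_succ_apply', ih, hshift, iterate_succ_apply']
  -- locality of iterates of τ
  have hloc : ∀ (k : ℕ) (x y : G → A) (g : G),
      (∀ m ∈ mpowAux M k, x (g * m) = y (g * m)) → τ^[k] x g = τ^[k] y g := by
    intro k
    induction k with
    | zero =>
      intro x y g h
      simpa using h 1 (by simp [mpowAux])
    | succ k ih =>
      intro x y g h
      rw [iterate_succ_apply', iterate_succ_apply', hτ, hτ]
      congr 1
      funext m
      refine ih x y (g * (m : G)) fun m' hm' => ?_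
      rw [mul_assoc]
      exact h ((m : G) * m') (by simp only [mpowAux]; exact Set.mul_mem_mul m.2 hm')
  -- the key step: τ^[N] x 1 = a₀ for all x ∈ S
  have key1 : ∀ x ∈ S, τ^[N] x 1 = a₀ := by
    intro x hx
    have hEfin : (mpowAux M N).Finite := mpowAux_finite hM N
    set V : Set (G → A) := ⋂ m ∈ mpowAux M N, {z : G → A | z m = x m} with hVdef
    have hVopen : IsOpen V := by
      refine hEfin.isOpen_biInter fun m _ => ?_
      have hpre : {z : G → A | z m = x m} = (fun z : G → A => z m) ⁻¹' ({x m} : Set A) := rfl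
      rw [hpre]
      exact (isOpen_discrete _).preimage (continuous_apply m)
    have hxV : x ∈ V := by
      rw [hVdef]; exact mem_iInter₂.2 fun m _ => rfl
    obtain ⟨F, hFfin, hF⟩ := hmix U V hUopen hVopen hUne ⟨x, hxV, hx⟩
    obtain ⟨g, hg⟩ := hFfin.infinite_compl.nonempty
    obtain ⟨y, hyU, v, hvV, hvy⟩ := hF g hg
    have hyx₀ : τ^[N] y = x₀ := hUkey y hyU
    have hveq : v = fun h => y (g * h) := by
      funext h
      rw [← hvy]
      simp
    have hvx₀ : τ^[N] v = x₀ := by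
      rw [hveq, hshiftIter N g y, hyx₀]
      funext h
      rw [hx₀const, hx₀const]
    have hvx : ∀ m ∈ mpowAux M N, x ((1 : G) * m) = v ((1 : G) * m) := by
      intro m hm
      have : v m = x m := by
        have := hvV.1
        rw [hVdef] at this
        exact mem_iInter₂.1 this m hm
      simp [this]
    calc τ^[N] x 1 = τ^[N] v 1 := hloc N x v 1 hvx
      _ = a₀ := by rw [hvx₀, hx₀const]
  -- conclude by shifting
  refine ⟨N, Nat.succ_le_succ (Nat.zero_le n), fun x hx => ?_⟩
  funext g
  have hx' : (fun h => x (g * h)) ∈ S := by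
    have := hSinv g⁻¹ x hx
    simpa using this
  have h1 := key1 _ hx'
  rw [hshiftIter N g x] at h1
  simp only [mul_one] at h1
  rw [h1, hx₀const]
end

section
/- Let G be a group, H ⊆ G a subgroup, A a set, and τ : A^G → A^G a cellular automaton with a memory set contained in H. Write A^G = ∏_{c ∈ G/H} A^c as a product over right cosets of H, so that τ = ∏_{c ∈ G/H} τ_c with each τ_c conjugate to the restriction cellular automaton τ_H : A^H → A^H. Then Ω(τ) corresponds to ∏_{c ∈ G/H} Ω(τ_c) under this identification; in particular, if τ_H is nilpotent then τ is nilpotent. -/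
private lemma ca_comm {G A : Type*} [Group G] (H : Subgroup G)
    (M : Set G) (hMH : M ⊆ (H : Set G)) (μ : (M → A) → A) :
    ∀ (n : ℕ) (x : G → A) (g : G) (h : H),
      ((fun y : G → A => fun g : G => μ (fun m : M => y (g * (m : G))))^[n] x) (g * (h : G)) =
      ((fun y : H → A =>
          fun h : H => μ (fun m : M => y ⟨(h : G) * (m : G), mul_mem h.2 (hMH m.2)⟩))^[n]
        (fun h' : H => x (g * (h' : G)))) h := by
  intro n
  induction n with
  | zero => intro x g h; rfl
  | succ n ih =>
    intro x g h
    rw [Function.iterate_succ_apply', Function.iterate_succ_apply']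
    congr 1
    funext m
    have := ih x g ⟨(h : G) * (m : G), mul_mem h.2 (hMH m.2)⟩
    simpa [mul_assoc] using this

/-- Restriction of cellular automata to a subgroup `H` containing a memory set.
The limit set `Ω(τ)` is the product of the limit sets of the coset restrictions:
`x ∈ Ω(τ)` iff, for every `g ∈ G`, the translated restriction `h ↦ x (g h)` of `x`
to the coset `gH` lies in `Ω(τ_H)`.  In particular, if the restriction `τ_H` is
nilpotent then `τ` is nilpotent. -/
theorem restriction_limitSet_and_nilpotency {G A : Type*} [Group G] (H : Subgroup G)
    (M : Set G) (hMfin : M.Finite) (hMH : M ⊆ (H : Set G)) (μ : (M → A) → A) :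
    (∀ x : G → A,
        (x ∈ ⋂ n ≥ 1,
            Set.range (fun y : G → A => fun g : G => μ (fun m : M => y (g * (m : G))))^[n]) ↔
        (∀ g : G,
          (fun h : H => x (g * (h : G))) ∈ ⋂ n ≥ 1,
            Set.range (fun y : H → A =>
              fun h : H => μ (fun m : M => y ⟨(h : G) * (m : G), mul_mem h.2 (hMH m.2)⟩))^[n]))
    ∧
    ((∃ n₀ ≥ 1, ∃ y₀ : H → A, ∀ y : H → A,
        (fun y : H → A =>
          fun h : H => μ (fun m : M => y ⟨(h : G) * (m : G), mul_mem h.2 (hMH m.2)⟩))^[n₀] y = y₀) →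
      (∃ n₀ ≥ 1, ∃ x₀ : G → A, ∀ x : G → A,
        (fun y : G → A => fun g : G => μ (fun m : M => y (g * (m : G))))^[n₀] x = x₀)) := by
  set τG : (G → A) → (G → A) :=
    fun y : G → A => fun g : G => μ (fun m : M => y (g * (m : G))) with hτG
  set τH : (H → A) → (H → A) :=
    fun y : H → A =>
      fun h : H => μ (fun m : M => y ⟨(h : G) * (m : G), mul_mem h.2 (hMH m.2)⟩) with hτH
  have comm := ca_comm H M hMH μ
  constructor
  · intro x
    constructor
    · intro hx g
      simp only [Set.mem_iInter] at hx ⊢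
      intro n hn
      obtain ⟨y, hy⟩ := hx n hn
      refine ⟨fun h' : H => y (g * (h' : G)), ?_⟩
      funext h
      rw [← comm n y g h, hy]
    · intro hx
      simp only [Set.mem_iInter] at hx ⊢
      intro n hn
      -- choose preimages on each coset
      choose z hz using fun g : G => hx g n hn
      refine ⟨fun g : G =>
        z ((Quotient.out (QuotientGroup.mk (s := H) g)))
          ⟨(Quotient.out (QuotientGroup.mk (s := H) g))⁻¹ * g, ?_⟩, ?_⟩
      · have : QuotientGroup.mk (s := H)
            (Quotient.out (QuotientGroup.mk (s := H) g)) = QuotientGroup.mk (s := H) g := by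
          simp
        exact (QuotientGroup.eq.mp this)
      · funext g
        set g₀ : G := Quotient.out (QuotientGroup.mk (s := H) g) with hg₀
        have hmem : g₀⁻¹ * g ∈ H := by
          have : QuotientGroup.mk (s := H) g₀ = QuotientGroup.mk (s := H) g := by simp [hg₀]
          exact (QuotientGroup.eq.mp this)
        have hgeq : g = g₀ * ((⟨g₀⁻¹ * g, hmem⟩ : H) : G) := by
          simp [mul_inv_cancel_left]
        conv_lhs => rw [hgeq]
        rw [comm n _ g₀ ⟨g₀⁻¹ * g, hmem⟩]
        have hzeq : (fun h' : H => (fun g : G =>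
            z ((Quotient.out (QuotientGroup.mk (s := H) g)))
              ⟨(Quotient.out (QuotientGroup.mk (s := H) g))⁻¹ * g, by
                have : QuotientGroup.mk (s := H)
                    (Quotient.out (QuotientGroup.mk (s := H) g)) =
                    QuotientGroup.mk (s := H) g := by simp
                exact (QuotientGroup.eq.mp this)⟩) (g₀ * (h' : G))) = z g₀ := by
          funext h'
          have hq : QuotientGroup.mk (s := H) (g₀ * (h' : G)) =
              QuotientGroup.mk (s := H) g := by
            rw [QuotientGroup.mk_mul_of_mem _ h'.2]
            simp [hg₀]
          simp only [hq, ← hg₀]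
          congr 1
          exact Subtype.ext (by simp)
        rw [hzeq, hz g₀]
        have hgq : g₀ * ((⟨g₀⁻¹ * g, hmem⟩ : H) : G) = g := by
          simp [mul_inv_cancel_left]
        simp [hgq]
  · rintro ⟨n₀, hn₀, y₀, hy₀⟩
    refine ⟨n₀, hn₀, fun _ => y₀ 1, ?_⟩
    intro x
    funext g
    have := comm n₀ x g 1
    simpa [mul_one] using (this.trans (by rw [hy₀]))
end

section
/- Let τ : ℝ^ℤ → ℝ^ℤ be the cellular automaton defined by τ(c)(n) = c(n+1) − c(n)² for all c ∈ ℝ^ℤ and n ∈ ℤ. Then the constant configuration e given by e(n) = 1 for all n ∈ ℤ does not belong to the image of τ; in particular, the limit set Ω(τ) := ⋂_{k ≥ 1} τ^k(ℝ^ℤ) does not contain e. -/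
/-- For the cellular automaton `τ : ℝ^ℤ → ℝ^ℤ`, `τ(c)(n) = c(n+1) - c(n)²`, the constant
configuration `e ≡ 1` is not in the image of `τ`; in particular it is not in the limit
set `Ω(τ) = ⋂_{k ≥ 1} τ^k(ℝ^ℤ)`. -/
theorem one_not_in_image_of_tau :
    (fun _ : ℤ => (1 : ℝ)) ∉
        Set.range (fun c : ℤ → ℝ => fun n : ℤ => c (n + 1) - (c n) ^ 2) ∧
    (fun _ : ℤ => (1 : ℝ)) ∉
        ⋂ k ≥ 1, Set.range (fun c : ℤ → ℝ => fun n : ℤ => c (n + 1) - (c n) ^ 2)^[k] := by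
  have h1 : (fun _ : ℤ => (1 : ℝ)) ∉
      Set.range (fun c : ℤ → ℝ => fun n : ℤ => c (n + 1) - (c n) ^ 2) := by
    rintro ⟨c, hc⟩
    have h : ∀ n : ℤ, c (n + 1) = c n ^ 2 + 1 := by
      intro n
      have := congrFun hc n
      simp only at this
      linarith
    have ge1 : ∀ n : ℤ, 1 ≤ c n := by
      intro n
      have := h (n - 1)
      rw [sub_add_cancel] at this
      nlinarith [sq_nonneg (c (n - 1))]
    have step : ∀ n : ℤ, c n + 1 ≤ c (n + 1) := by
      intro n
      have := h n
      nlinarith [ge1 n]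
    have key : ∀ k : ℕ, c (-(k : ℤ)) + k ≤ c 0 := by
      intro k
      induction k with
      | zero => simp
      | succ k ih =>
        have hs := step (-((k : ℤ) + 1))
        have : -((k : ℤ) + 1) + 1 = -(k : ℤ) := by ring
        rw [this] at hs
        push_cast
        push_cast at ih
        linarith
    obtain ⟨k, hk⟩ := exists_nat_gt (c 0)
    have := key k
    have := ge1 (-(k : ℤ))
    linarith
  refine ⟨h1, fun hmem => h1 ?_⟩
  simp only [Set.mem_iInter] at hmem
  have := hmem 1 le_rfl
  rwa [Function.iterate_one] at this
end
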